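/- The linear span of the complex Hermite polynomials {J_{m,n} : m,n ∈ ℕ} equals the linear span of the monomials {z^m · conj(z)^n : m,n ∈ ℕ} as subspaces of the space of functions ℂ → ℂ; in particular, for all m,n ∈ ℕ, z^m conj(z)^n = Σ_{k=0}^{min(m,n)} binom(m,k) binom(n,k) k! √((m-k)!(n-k)! 2^{m+n}) J_{m-k,n-k}(z). -/

import Mathlib

open MeasureTheory Complex Filter Finset
open scoped Real ComplexConjugate

/-- The complex Hermite polynomial `J_{m,n}`. -/
noncomputable def J (m n : ℕ) (z : ℂ) : ℂ :=
  (Real.sqrt (m.factorial * n.factorial * 2 ^ (m + n)) : ℂ)⁻¹ *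
    ∑ r ∈ Finset.range (min m n + 1),
      (-1 : ℂ) ^ r * (r.factorial : ℂ) * 2 ^ r * (m.choose r : ℂ) * (n.choose r : ℂ) *
        z ^ (m - r) * (conj z) ^ (n - r)

noncomputable def P (m n : ℕ) (z : ℂ) : ℂ :=
  ∑ r ∈ Finset.range (min m n + 1),
      (-1 : ℂ) ^ r * (r.factorial : ℂ) * 2 ^ r * (m.choose r : ℂ) * (n.choose r : ℂ) *
        z ^ (m - r) * (conj z) ^ (n - r)

lemma sqrt_pos' (m n : ℕ) : 0 < Real.sqrt (m.factorial * n.factorial * 2 ^ (m + n)) := by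
  apply Real.sqrt_pos.2
  positivity

lemma sqrt_mul_J (m n : ℕ) (z : ℂ) :
    (Real.sqrt (m.factorial * n.factorial * 2 ^ (m + n)) : ℂ) * J m n z = P m n z := by
  rw [J, ← mul_assoc, mul_inv_cancel₀, one_mul, P]
  exact_mod_cast (sqrt_pos' m n).ne'

lemma sqrt_shift {m n k : ℕ} (hm : k ≤ m) (hn : k ≤ n) :
    Real.sqrt ((m - k).factorial * (n - k).factorial * 2 ^ (m + n))
      = 2 ^ k * Real.sqrt ((m - k).factorial * (n - k).factorial * 2 ^ ((m - k) + (n - k))) := by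
  have h : (m + n) = ((m - k) + (n - k)) + k * 2 := by omega
  rw [h, pow_add, ← mul_assoc, Real.sqrt_mul (by positivity), pow_mul,
    Real.sqrt_sq (by positivity), mul_comm]

lemma tri_sum (N : ℕ) (g : ℕ → ℕ → ℂ) :
    ∑ k ∈ range (N + 1), ∑ r ∈ range (N - k + 1), g k r
      = ∑ s ∈ range (N + 1), ∑ k ∈ range (s + 1), g k (s - k) := by
  rw [Finset.sum_sigma', Finset.sum_sigma']
  refine Finset.sum_bij' (fun p _ => ⟨p.1 + p.2, p.1⟩) (fun p _ => ⟨p.2, p.1 - p.2⟩)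
    ?_ ?_ ?_ ?_ ?_
  · rintro ⟨a, b⟩ h
    simp only [Finset.mem_sigma, Finset.mem_range] at h ⊢
    omega
  · rintro ⟨a, b⟩ h
    simp only [Finset.mem_sigma, Finset.mem_range] at h ⊢
    omega
  · rintro ⟨a, b⟩ h
    simp only [Finset.mem_sigma, Finset.mem_range] at h
    dsimp only
    rw [show a + b - a = b by omega]
  · rintro ⟨a, b⟩ h
    simp only [Finset.mem_sigma, Finset.mem_range] at h
    dsimp only
    rw [show b + (a - b) = a by omega]
  · rintro ⟨a, b⟩ h
    rw [show a + b - a = b by omega]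

lemma alt_sum (s : ℕ) (hs : s ≠ 0) : ∑ k ∈ range (s + 1), (-1 : ℂ) ^ k * (s.choose k : ℂ) = 0 := by
  have := Int.alternating_sum_range_choose_of_ne hs
  have h2 : ((∑ m ∈ range (s + 1), ((-1) ^ m * s.choose m : ℤ) : ℤ) : ℂ) = 0 := by
    rw [this]; simp
  push_cast at h2
  exact h2

lemma expansion (m n : ℕ) (z : ℂ) :
    z ^ m * (conj z) ^ n
      = ∑ k ∈ Finset.range (min m n + 1),
          (m.choose k : ℂ) * (n.choose k : ℂ) * (k.factorial : ℂ) *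
            (Real.sqrt ((m - k).factorial * (n - k).factorial * 2 ^ (m + n)) : ℂ) *
            J (m - k) (n - k) z := by
  set N := min m n with hN
  have step1 : ∀ k ∈ range (N + 1),
      (m.choose k : ℂ) * (n.choose k : ℂ) * (k.factorial : ℂ) *
        (Real.sqrt ((m - k).factorial * (n - k).factorial * 2 ^ (m + n)) : ℂ) *
        J (m - k) (n - k) z
      = ∑ r ∈ range (N - k + 1),
          ((m.choose k : ℂ) * (n.choose k : ℂ) * (k.factorial : ℂ) * 2 ^ k) *
          ((-1 : ℂ) ^ r * (r.factorial : ℂ) * 2 ^ r * ((m - k).choose r : ℂ) *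
            ((n - k).choose r : ℂ) * z ^ (m - k - r) * (conj z) ^ (n - k - r)) := by
    intro k hk
    rw [Finset.mem_range] at hk
    have hkm : k ≤ m := le_trans (by omega) (min_le_left m n)
    have hkn : k ≤ n := le_trans (by omega) (min_le_right m n)
    have hmin : min (m - k) (n - k) = N - k := by omega
    rw [sqrt_shift hkm hkn]
    push_cast
    rw [mul_assoc _ _ (J _ _ z), mul_assoc _ _ (J _ _ z), sqrt_mul_J, P, hmin, Finset.mul_sum, Finset.mul_sum]
    exact Finset.sum_congr rfl fun r _ => by ring
  rw [Finset.sum_congr rfl step1, tri_sum]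
  have inner : ∀ s ∈ range (N + 1), s ≠ 0 →
      (∑ k ∈ range (s + 1),
          ((m.choose k : ℂ) * (n.choose k : ℂ) * (k.factorial : ℂ) * 2 ^ k) *
          ((-1 : ℂ) ^ (s - k) * ((s - k).factorial : ℂ) * 2 ^ (s - k) * ((m - k).choose (s - k) : ℂ) *
            ((n - k).choose (s - k) : ℂ) * z ^ (m - k - (s - k)) * (conj z) ^ (n - k - (s - k)))) = 0 := by
    intro s hs hs0
    rw [Finset.mem_range] at hs
    have hsm : s ≤ m := le_trans (by omega) (min_le_left m n)
    have hsn : s ≤ n := le_trans (by omega) (min_le_right m n)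
    have key : ∀ k ∈ range (s + 1),
        ((m.choose k : ℂ) * (n.choose k : ℂ) * (k.factorial : ℂ) * 2 ^ k) *
          ((-1 : ℂ) ^ (s - k) * ((s - k).factorial : ℂ) * 2 ^ (s - k) * ((m - k).choose (s - k) : ℂ) *
            ((n - k).choose (s - k) : ℂ) * z ^ (m - k - (s - k)) * (conj z) ^ (n - k - (s - k)))
        = ((m.choose s : ℂ) * (n.choose s : ℂ) * (s.factorial : ℂ) * 2 ^ s * (-1 : ℂ) ^ s *
            z ^ (m - s) * (conj z) ^ (n - s)) * ((-1 : ℂ) ^ k * (s.choose k : ℂ)) := by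
      intro k hk
      rw [Finset.mem_range] at hk
      have hks : k ≤ s := by omega
      -- choose identities
      have c1 : (m.choose k : ℂ) * ((m - k).choose (s - k) : ℂ) = (m.choose s : ℂ) * (s.choose k : ℂ) := by
        rw [← Nat.cast_mul, ← Nat.cast_mul, ← Nat.choose_mul hks]
      have c2 : (n.choose k : ℂ) * ((n - k).choose (s - k) : ℂ) = (n.choose s : ℂ) * (s.choose k : ℂ) := by
        rw [← Nat.cast_mul, ← Nat.cast_mul, ← Nat.choose_mul hks]
      have c3 : (k.factorial : ℂ) * ((s - k).factorial : ℂ) * (s.choose k : ℂ) = (s.factorial : ℂ) := by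
        rw [← Nat.cast_mul, ← Nat.cast_mul]
        congr 1
        rw [mul_comm, ← mul_assoc]
        exact Nat.choose_mul_factorial_mul_factorial hks
      have sgn : (-1 : ℂ) ^ (s - k) = (-1 : ℂ) ^ s * (-1 : ℂ) ^ k := by
        have h1 : (-1 : ℂ) ^ (s - k) * (-1 : ℂ) ^ k = (-1 : ℂ) ^ s := by
          rw [← pow_add]; congr 1; omega
        have h2 : (-1 : ℂ) ^ k * (-1 : ℂ) ^ k = 1 := by
          rw [← pow_add, ← two_mul, pow_mul]; norm_num
        calc (-1 : ℂ) ^ (s - k) = (-1 : ℂ) ^ (s - k) * ((-1 : ℂ) ^ k * (-1 : ℂ) ^ k) := by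
              rw [h2, mul_one]
          _ = (-1 : ℂ) ^ s * (-1 : ℂ) ^ k := by rw [← mul_assoc, h1]
      have hpow2 : (2 : ℂ) ^ k * (2 : ℂ) ^ (s - k) = 2 ^ s := by
        rw [← pow_add]; congr 1; omega
      have hz1 : m - k - (s - k) = m - s := by omega
      have hz2 : n - k - (s - k) = n - s := by omega
      rw [hz1, hz2, sgn]
      calc _ = ((m.choose k : ℂ) * ((m - k).choose (s - k) : ℂ)) *
              ((n.choose k : ℂ) * ((n - k).choose (s - k) : ℂ)) *
              ((k.factorial : ℂ) * ((s - k).factorial : ℂ)) *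
              ((2 : ℂ) ^ k * (2 : ℂ) ^ (s - k)) * ((-1 : ℂ) ^ s * (-1 : ℂ) ^ k) *
              z ^ (m - s) * (conj z) ^ (n - s) := by ring
        _ = _ := by
            rw [c1, c2, hpow2]
            rw [show (m.choose s : ℂ) * (s.choose k : ℂ) * ((n.choose s : ℂ) * (s.choose k : ℂ)) *
                ((k.factorial : ℂ) * ((s - k).factorial : ℂ)) =
                (m.choose s : ℂ) * (n.choose s : ℂ) * (s.choose k : ℂ) *
                ((k.factorial : ℂ) * ((s - k).factorial : ℂ) * (s.choose k : ℂ)) by ring, c3]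
            ring
    rw [Finset.sum_congr rfl key, ← Finset.mul_sum, alt_sum s hs0, mul_zero]
  rw [Finset.sum_eq_single 0]
  · simp
  · intro s hs hs0
    exact inner s hs hs0
  · intro h
    simp at h

/-- The span of the complex Hermite polynomials equals the span of the monomials
`z^m z̄^n`, together with the explicit expansion of each monomial. -/
theorem span_J_eq_span_monomials :
    (Submodule.span ℂ {f : ℂ → ℂ | ∃ m n : ℕ, f = J m n}
      = Submodule.span ℂ
          {f : ℂ → ℂ | ∃ m n : ℕ, f = fun z => z ^ m * (conj z) ^ n})
    ∧ ∀ (m n : ℕ) (z : ℂ),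
        z ^ m * (conj z) ^ n
          = ∑ k ∈ Finset.range (min m n + 1),
              (m.choose k : ℂ) * (n.choose k : ℂ) * (k.factorial : ℂ) *
                (Real.sqrt ((m - k).factorial * (n - k).factorial * 2 ^ (m + n)) : ℂ) *
                J (m - k) (n - k) z := by
  constructor
  · apply le_antisymm
    · rw [Submodule.span_le]
      rintro f ⟨m, n, rfl⟩
      have hJ : J m n = ∑ r ∈ Finset.range (min m n + 1),
          ((Real.sqrt (m.factorial * n.factorial * 2 ^ (m + n)) : ℂ)⁻¹ *
            ((-1 : ℂ) ^ r * (r.factorial : ℂ) * 2 ^ r * (m.choose r : ℂ) * (n.choose r : ℂ))) •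
            (fun z : ℂ => z ^ (m - r) * (conj z) ^ (n - r)) := by
        funext z
        simp only [Finset.sum_apply, Pi.smul_apply, smul_eq_mul, J, Finset.mul_sum]
        exact Finset.sum_congr rfl fun r _ => by ring
      rw [hJ]
      exact Submodule.sum_mem _ fun r _ =>
        Submodule.smul_mem _ _ (Submodule.subset_span ⟨m - r, n - r, rfl⟩)
    · rw [Submodule.span_le]
      rintro f ⟨m, n, rfl⟩
      have hM : (fun z : ℂ => z ^ m * (conj z) ^ n)
          = ∑ k ∈ Finset.range (min m n + 1),
              ((m.choose k : ℂ) * (n.choose k : ℂ) * (k.factorial : ℂ) *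
                (Real.sqrt ((m - k).factorial * (n - k).factorial * 2 ^ (m + n)) : ℂ)) •
                J (m - k) (n - k) := by
        funext z
        simp only [Finset.sum_apply, Pi.smul_apply, smul_eq_mul]
        exact expansion m n z
      rw [hM]
      exact Submodule.sum_mem _ fun k _ =>
        Submodule.smul_mem _ _ (Submodule.subset_span ⟨m - k, n - k, rfl⟩)
  · exact expansion
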